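/- Let β ∈ (0,1) and a ≥ 0, or β = 1 and a > 1. Then ∫_0^t (t-s)^{-1/2} s^{-β} ℓ(s)^{-a} ds ≲ t^{1/2-β} ℓ(t)^{-a} if β < 1, and ≲ t^{-1/2} ℓ(t)^{1-a} if β = 1, where ℓ(s) = log(max(1/s,2)). -/

import Mathlib

/-!
Split `(0, t)` at `t / 2`. On `(0, t / 2)` the kernel `(t - s) ^ (-1/2)` is at most
`(t / 2) ^ (-1/2)`, so it remains to integrate the weight `s ^ (-β) ℓ(s) ^ (-a)` there:
for `β < 1`, `ℓ(s) ^ (-a) ≤ ℓ(t) ^ (-a)` leaves `∫₀^{t/2} s ^ (-β) ds = (t/2) ^ (1 - β) / (1 - β)`;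
for `β = 1` the substitution `s = exp (-u)` turns it into
`∫_{ℓ(t/2)}^∞ u ^ (-a) du = ℓ(t/2) ^ (1 - a) / (a - 1)`.
On `[t / 2, t)` the weight is at most `(t / 2) ^ (-β) ℓ(t) ^ (-a)` and the kernel integrates to
`2 (t / 2) ^ (1/2)`; for `β = 1` this term is absorbed using `ℓ ≥ log 2`.
-/

open MeasureTheory Set

/-- Tamed logarithm `ℓ(t) = log(1/t ∨ 2)`. -/
noncomputable def tamedLog (t : ℝ) : ℝ := Real.log (max (1/t) 2)

lemma log_two_le_tamedLog (t : ℝ) : Real.log 2 ≤ tamedLog t :=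
  Real.log_le_log two_pos (le_max_right _ _)

lemma tamedLog_pos (t : ℝ) : 0 < tamedLog t :=
  (Real.log_pos one_lt_two).trans_le (log_two_le_tamedLog t)

lemma antitoneOn_tamedLog : AntitoneOn tamedLog (Ioi 0) := fun _ hs _ _ hst =>
  Real.log_le_log (two_pos.trans_le (le_max_right _ _))
    (max_le_max (one_div_le_one_div_of_le hs hst) le_rfl)

lemma monotoneOn_tamedLog_rpow_neg {a : ℝ} (ha : 0 ≤ a) :
    MonotoneOn (fun s => tamedLog s ^ (-a)) (Ioi 0) := fun _ hs _ ht hst =>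
  Real.rpow_le_rpow_of_nonpos (tamedLog_pos _) (antitoneOn_tamedLog hs ht hst) (neg_nonpos.2 ha)

lemma tamedLog_rpow_neg_mul_log_two_le (a t : ℝ) :
    tamedLog t ^ (-a) * Real.log 2 ≤ tamedLog t ^ (1 - a) := by
  rw [sub_eq_neg_add, Real.rpow_add (tamedLog_pos t), Real.rpow_one]
  exact mul_le_mul_of_nonneg_left (log_two_le_tamedLog t) (Real.rpow_nonneg (tamedLog_pos t).le _)

lemma measurable_tamedLog : Measurable tamedLog :=
  Real.measurable_log.comp ((measurable_const.div measurable_id).max measurable_const)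

lemma tamedLog_exp_neg {u : ℝ} (hu : Real.log 2 ≤ u) : tamedLog (Real.exp (-u)) = u := by
  have h2u : 2 ≤ Real.exp u := by simpa [Real.exp_log] using Real.exp_le_exp.2 hu
  rw [tamedLog, one_div, ← Real.exp_neg, neg_neg, max_eq_left h2u, Real.log_exp]

lemma exp_neg_tamedLog {x : ℝ} (hx0 : 0 < x) (hx : x ≤ 1/2) : Real.exp (-tamedLog x) = x := by
  have h2 : 2 ≤ 1 / x := by rw [le_div_iff₀ hx0]; linarith
  rw [tamedLog, max_eq_left h2, one_div, Real.log_inv, neg_neg, Real.exp_log hx0]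

lemma div_two_rpow_le {t c : ℝ} (ht : 0 < t) (hc : -1 ≤ c) : (t / 2) ^ c ≤ 2 * t ^ c := by
  rw [Real.div_rpow ht.le zero_le_two, div_le_iff₀ (by positivity), mul_comm, ← mul_assoc]
  refine le_mul_of_one_le_left (by positivity) ?_
  have h := Real.rpow_le_rpow_of_exponent_le one_le_two hc
  rw [Real.rpow_neg_one] at h
  linarith

lemma integrableOn_and_setIntegral_le {α : Type*} [MeasurableSpace α] {μ : Measure α}
    {S : Set α} {f h : α → ℝ} (hS : MeasurableSet S) (hf : Measurable f)
    (hf0 : ∀ x ∈ S, 0 ≤ f x) (hfh : ∀ x ∈ S, f x ≤ h x) (hh : IntegrableOn h S μ) :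
    IntegrableOn f S μ ∧ ∫ x in S, f x ∂μ ≤ ∫ x in S, h x ∂μ := by
  have hint : IntegrableOn f S μ := hh.mono' hf.aestronglyMeasurable <|
    (ae_restrict_iff' hS).2 <| ae_of_all _ fun x hx => by
      rw [Real.norm_of_nonneg (hf0 x hx)]; exact hfh x hx
  exact ⟨hint, setIntegral_mono_on hint hh hS hfh⟩

lemma integral_rpow_neg_Ioo {β x : ℝ} (hβ : β < 1) (hx : 0 < x) :
    IntegrableOn (fun s : ℝ => s ^ (-β)) (Ioo 0 x) ∧
    ∫ s in Ioo (0:ℝ) x, s ^ (-β) = x ^ (1 - β) / (1 - β) := by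
  refine ⟨(intervalIntegral.integrableOn_Ioo_rpow_iff hx).2 (by linarith), ?_⟩
  rw [integral_Ioc_eq_integral_Ioo.symm, ← intervalIntegral.integral_of_le hx.le,
    integral_rpow (Or.inl (by linarith)), Real.zero_rpow (by linarith), neg_add_eq_sub, sub_zero]

lemma integral_sub_rpow_neg_Ico {γ t : ℝ} (hγ : γ < 1) (ht : 0 < t) :
    IntegrableOn (fun s : ℝ => (t - s) ^ (-γ)) (Ico (t / 2) t) ∧
    ∫ s in Ico (t / 2) t, (t - s) ^ (-γ) = (t / 2) ^ (1 - γ) / (1 - γ) := by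
  have hsub : t - t / 2 = t / 2 := by ring
  have hint : IntervalIntegrable (fun s : ℝ => (t - s) ^ (-γ)) volume (t / 2) t := by
    have hpow := intervalIntegral.intervalIntegrable_rpow' (a := 0) (b := t / 2)
      (by linarith : -1 < -γ)
    simpa [hsub] using (hpow.comp_sub_left t).symm
  refine ⟨((intervalIntegrable_iff_integrableOn_Ioc_of_le (by linarith)).1 hint).congr_set_ae
    Ico_ae_eq_Ioc, ?_⟩
  rw [setIntegral_congr_set Ico_ae_eq_Ioc, ← intervalIntegral.integral_of_le (by linarith),
    intervalIntegral.integral_comp_sub_left (fun u : ℝ => u ^ (-γ)) t, hsub, sub_self,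
    integral_rpow (Or.inl (by linarith)), Real.zero_rpow (by linarith), neg_add_eq_sub, sub_zero]

lemma integral_inv_mul_tamedLog_rpow_neg_Ioo_exp_neg {a c : ℝ} (ha : 1 < a)
    (hc : Real.log 2 ≤ c) :
    IntegrableOn (fun s : ℝ => s ^ (-1 : ℝ) * tamedLog s ^ (-a)) (Ioo 0 (Real.exp (-c))) ∧
    ∫ s in Ioo 0 (Real.exp (-c)), s ^ (-1 : ℝ) * tamedLog s ^ (-a) = c ^ (1 - a) / (a - 1) := by
  have hc0 : 0 < c := (Real.log_pos one_lt_two).trans_le hc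
  have hderiv : ∀ u ∈ Ioi c,
      HasDerivWithinAt (fun u => Real.exp (-u)) (-Real.exp (-u)) (Ioi c) u :=
    fun u _ => by simpa using (hasDerivAt_neg u).exp.hasDerivWithinAt
  have hinj : InjOn (fun u => Real.exp (-u)) (Ioi c) :=
    (Real.exp_injective.comp neg_injective).injOn
  have himage : (fun u : ℝ => Real.exp (-u)) '' Ioi c = Ioo 0 (Real.exp (-c)) := by
    rw [show (fun u : ℝ => Real.exp (-u)) = Real.exp ∘ Neg.neg from rfl, image_comp,
      image_neg_eq_neg, neg_Ioi, Real.image_exp_Iio]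
  have hsubst : ∀ u ∈ Ioi c,
      |-Real.exp (-u)| • (Real.exp (-u) ^ (-1 : ℝ) * tamedLog (Real.exp (-u)) ^ (-a))
        = u ^ (-a) := by
    intro u hu
    rw [tamedLog_exp_neg (hc.trans hu.le), abs_neg, abs_of_pos (Real.exp_pos _),
      smul_eq_mul, Real.rpow_neg_one, ← mul_assoc, mul_inv_cancel₀ (Real.exp_pos _).ne', one_mul]
  rw [← himage, integrableOn_image_iff_integrableOn_abs_deriv_smul measurableSet_Ioi hderiv hinj,
    integral_image_eq_integral_abs_deriv_smul measurableSet_Ioi hderiv hinj,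
    integrableOn_congr_fun hsubst measurableSet_Ioi,
    setIntegral_congr_fun measurableSet_Ioi hsubst,
    integral_Ioi_rpow_of_lt (by linarith) hc0]
  refine ⟨integrableOn_Ioi_rpow_of_lt (by linarith) hc0, ?_⟩
  rw [neg_add_eq_sub, neg_div, ← div_neg, neg_sub]

lemma integral_sub_rpow_neg_mul_le {γ t M : ℝ} {g : ℝ → ℝ} (hγ0 : 0 ≤ γ) (hγ1 : γ < 1)
    (ht : 0 < t) (hg : Measurable g) (hg0 : ∀ s ∈ Ioo 0 t, 0 ≤ g s)
    (hgi : IntegrableOn g (Ioo 0 (t / 2))) (hgM : ∀ s ∈ Ico (t / 2) t, g s ≤ M) :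
    IntegrableOn (fun s => (t - s) ^ (-γ) * g s) (Ioo 0 t) ∧
    ∫ s in Ioo 0 t, (t - s) ^ (-γ) * g s
      ≤ (t / 2) ^ (-γ) * (∫ s in Ioo 0 (t / 2), g s) + (t / 2) ^ (1 - γ) / (1 - γ) * M := by
  have hhalf : 0 < t / 2 := half_pos ht
  have hmeas : Measurable fun s => (t - s) ^ (-γ) * g s := by fun_prop
  have hnonneg : ∀ s ∈ Ioo 0 t, 0 ≤ (t - s) ^ (-γ) * g s := fun s hs =>
    mul_nonneg (Real.rpow_nonneg (sub_nonneg.2 hs.2.le) _) (hg0 s hs)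
  obtain ⟨hint₀, hle₀⟩ := integrableOn_and_setIntegral_le (h := fun s => (t / 2) ^ (-γ) * g s)
    measurableSet_Ioo hmeas (fun s hs => hnonneg s ⟨hs.1, hs.2.trans (half_lt_self ht)⟩)
    (fun s hs => mul_le_mul_of_nonneg_right
      (Real.rpow_le_rpow_of_nonpos hhalf (by linarith [hs.2]) (neg_nonpos.2 hγ0))
      (hg0 s ⟨hs.1, hs.2.trans (half_lt_self ht)⟩))
    (hgi.const_mul _)
  obtain ⟨hkint, hkernel⟩ := integral_sub_rpow_neg_Ico hγ1 ht
  obtain ⟨hint₁, hle₁⟩ := integrableOn_and_setIntegral_le (h := fun s => (t - s) ^ (-γ) * M)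
    measurableSet_Ico hmeas (fun s hs => hnonneg s ⟨hhalf.trans_le hs.1, hs.2⟩)
    (fun s hs => mul_le_mul_of_nonneg_left (hgM s hs) (Real.rpow_nonneg (by linarith [hs.2]) _))
    (hkint.mul_const M)
  have hunion : Ioo 0 (t / 2) ∪ Ico (t / 2) t = Ioo 0 t :=
    Ioo_union_Ico_eq_Ioo hhalf (half_le_self ht.le)
  have hdisj : Disjoint (Ioo 0 (t / 2)) (Ico (t / 2) t) :=
    disjoint_left.2 fun s hs hs' => (hs.2.trans_le hs'.1).false
  refine ⟨hunion ▸ hint₀.union hint₁, ?_⟩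
  rw [← hunion, setIntegral_union hdisj measurableSet_Ico hint₀ hint₁]
  refine add_le_add (hle₀.trans_eq (integral_const_mul _ _)) (hle₁.trans_eq ?_)
  rw [integral_mul_const, hkernel]

lemma integral_sub_rpow_neg_mul_rpow_neg_tamedLog_le {γ β a t : ℝ} (hγ0 : 0 ≤ γ) (hγ1 : γ < 1)
    (hβ0 : 0 ≤ β) (hβ1 : β < 1) (ha : 0 ≤ a) (ht : 0 < t) :
    IntegrableOn (fun s => (t - s) ^ (-γ) * s ^ (-β) * tamedLog s ^ (-a)) (Ioo 0 t) ∧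
    ∫ s in Ioo 0 t, (t - s) ^ (-γ) * s ^ (-β) * tamedLog s ^ (-a)
      ≤ 2 * (1 / (1 - β) + 1 / (1 - γ)) * (t ^ (1 - γ - β) * tamedLog t ^ (-a)) := by
  simp only [mul_assoc]
  have hhalf : 0 < t / 2 := half_pos ht
  have hlog : ∀ s ∈ Ioc 0 t, tamedLog s ^ (-a) ≤ tamedLog t ^ (-a) := fun s hs =>
    monotoneOn_tamedLog_rpow_neg ha hs.1 ht hs.2
  obtain ⟨hpow, hpow_eq⟩ := integral_rpow_neg_Ioo hβ1 hhalf
  obtain ⟨hnear, hnear_le⟩ := integrableOn_and_setIntegral_le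
    (h := fun s => s ^ (-β) * tamedLog t ^ (-a)) measurableSet_Ioo
    (by have := measurable_tamedLog; fun_prop)
    (fun s hs => mul_nonneg (Real.rpow_nonneg hs.1.le _) (Real.rpow_nonneg (tamedLog_pos s).le _))
    (fun s hs => mul_le_mul_of_nonneg_left (hlog s ⟨hs.1, by linarith [hs.2]⟩)
      (Real.rpow_nonneg hs.1.le _))
    (hpow.mul_const _)
  obtain ⟨hint, hle⟩ := integral_sub_rpow_neg_mul_le (M := (t / 2) ^ (-β) * tamedLog t ^ (-a))
    hγ0 hγ1 ht (by have := measurable_tamedLog; fun_prop)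
    (fun s hs => mul_nonneg (Real.rpow_nonneg hs.1.le _) (Real.rpow_nonneg (tamedLog_pos s).le _))
    hnear
    (fun s hs => mul_le_mul (Real.rpow_le_rpow_of_nonpos hhalf hs.1 (neg_nonpos.2 hβ0))
      (hlog s ⟨hhalf.trans_le hs.1, hs.2.le⟩) (Real.rpow_nonneg (tamedLog_pos s).le _)
      (Real.rpow_nonneg hhalf.le _))
  have hnear_bound : ∫ s in Ioo 0 (t / 2), s ^ (-β) * tamedLog s ^ (-a)
      ≤ (t / 2) ^ (1 - β) / (1 - β) * tamedLog t ^ (-a) := by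
    rwa [integral_mul_const, hpow_eq] at hnear_le
  refine ⟨hint, hle.trans ?_⟩
  have hL : 0 ≤ tamedLog t ^ (-a) := Real.rpow_nonneg (tamedLog_pos t).le _
  have hK : 0 ≤ 1 / (1 - β) + 1 / (1 - γ) := by
    have : 0 < 1 - β := by linarith
    have : 0 < 1 - γ := by linarith
    positivity
  calc _ ≤ (t / 2) ^ (-γ) * ((t / 2) ^ (1 - β) / (1 - β) * tamedLog t ^ (-a))
        + (t / 2) ^ (1 - γ) / (1 - γ) * ((t / 2) ^ (-β) * tamedLog t ^ (-a)) := by gcongr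
    _ = (1 / (1 - β) + 1 / (1 - γ)) * ((t / 2) ^ (1 - γ - β) * tamedLog t ^ (-a)) := by
        have e₁ : (t / 2) ^ (1 - γ - β) = (t / 2) ^ (-γ) * (t / 2) ^ (1 - β) := by
          rw [← Real.rpow_add hhalf]; ring_nf
        have e₂ : (t / 2) ^ (1 - γ - β) = (t / 2) ^ (1 - γ) * (t / 2) ^ (-β) := by
          rw [← Real.rpow_add hhalf]; ring_nf
        linear_combination
          (-tamedLog t ^ (-a) / (1 - β)) * e₁ + (-tamedLog t ^ (-a) / (1 - γ)) * e₂
    _ ≤ (1 / (1 - β) + 1 / (1 - γ)) * (2 * t ^ (1 - γ - β) * tamedLog t ^ (-a)) := by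
        gcongr
        exact div_two_rpow_le ht (by linarith)
    _ = _ := by ring

lemma integral_sub_rpow_neg_mul_inv_tamedLog_le {γ a t : ℝ} (hγ0 : 0 ≤ γ) (hγ1 : γ < 1)
    (ha : 1 < a) (ht : 0 < t) (ht1 : t ≤ 1) :
    IntegrableOn (fun s => (t - s) ^ (-γ) * s ^ (-1 : ℝ) * tamedLog s ^ (-a)) (Ioo 0 t) ∧
    ∫ s in Ioo 0 t, (t - s) ^ (-γ) * s ^ (-1 : ℝ) * tamedLog s ^ (-a)
      ≤ 2 * (1 / (a - 1) + 1 / (1 - γ) / Real.log 2) * (t ^ (-γ) * tamedLog t ^ (1 - a)) := by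
  simp only [mul_assoc]
  have hhalf : 0 < t / 2 := half_pos ht
  obtain ⟨hnear, hnear_eq⟩ :=
    integral_inv_mul_tamedLog_rpow_neg_Ioo_exp_neg ha (log_two_le_tamedLog (t / 2))
  rw [exp_neg_tamedLog hhalf (by linarith)] at hnear hnear_eq
  obtain ⟨hint, hle⟩ := integral_sub_rpow_neg_mul_le (M := (t / 2) ^ (-1 : ℝ) * tamedLog t ^ (-a))
    hγ0 hγ1 ht (by have := measurable_tamedLog; fun_prop)
    (fun s hs => mul_nonneg (Real.rpow_nonneg hs.1.le _) (Real.rpow_nonneg (tamedLog_pos s).le _))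
    hnear
    (fun s hs => mul_le_mul (Real.rpow_le_rpow_of_nonpos hhalf hs.1 (by norm_num))
      (monotoneOn_tamedLog_rpow_neg (by linarith) (hhalf.trans_le hs.1) ht hs.2.le)
      (Real.rpow_nonneg (tamedLog_pos s).le _) (Real.rpow_nonneg hhalf.le _))
  refine ⟨hint, hle.trans ?_⟩
  rw [hnear_eq]
  have hlog : tamedLog (t / 2) ^ (1 - a) ≤ tamedLog t ^ (1 - a) := by
    simpa only [neg_sub] using
      monotoneOn_tamedLog_rpow_neg (by linarith : 0 ≤ a - 1) hhalf ht (half_le_self ht.le)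
  have hlog' : tamedLog t ^ (-a) ≤ tamedLog t ^ (1 - a) / Real.log 2 :=
    (le_div_iff₀ (Real.log_pos one_lt_two)).2 (tamedLog_rpow_neg_mul_log_two_le a t)
  have hpow : (t / 2) ^ (-γ) = (t / 2) ^ (1 - γ) * (t / 2) ^ (-1 : ℝ) := by
    rw [← Real.rpow_add hhalf]; ring_nf
  have : 0 < a - 1 := by linarith
  have : 0 < 1 - γ := by linarith
  calc _ ≤ (t / 2) ^ (-γ) * (tamedLog t ^ (1 - a) / (a - 1))
        + (t / 2) ^ (1 - γ) / (1 - γ)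
          * ((t / 2) ^ (-1 : ℝ) * (tamedLog t ^ (1 - a) / Real.log 2)) := by
        gcongr
    _ = (1 / (a - 1) + 1 / (1 - γ) / Real.log 2) * ((t / 2) ^ (-γ) * tamedLog t ^ (1 - a)) := by
        rw [hpow]; ring
    _ ≤ (1 / (a - 1) + 1 / (1 - γ) / Real.log 2) * (2 * t ^ (-γ) * tamedLog t ^ (1 - a)) := by
        have := Real.log_pos one_lt_two
        have := Real.rpow_nonneg (tamedLog_pos t).le (1 - a)
        gcongr _ * (?_ * _)
        exact div_two_rpow_le ht (by linarith)
    _ = _ := by ring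

/-- Let `β ∈ (0,1)` and `a ≥ 0`, or `β = 1` and `a > 1`. Then for
`t ∈ (0,1]` the integral `∫_0^t (t-s)^{-1/2} s^{-β} ℓ(s)^{-a} ds` is finite and bounded by
`C t^{1/2-β} ℓ(t)^{-a}` if `β < 1`, and by `C t^{-1/2} ℓ(t)^{1-a}` if `β = 1`. -/
theorem stmt11 (β a : ℝ)
    (hcase : (0 < β ∧ β < 1 ∧ 0 ≤ a) ∨ (β = 1 ∧ 1 < a)) :
    ∃ C > (0:ℝ), ∀ t ∈ Ioc (0:ℝ) 1,
      IntegrableOn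
        (fun s : ℝ => (t - s) ^ (-(1/2 : ℝ)) * s ^ (-β) * tamedLog s ^ (-a))
        (Ioo 0 t) ∧
      (∫ s in Ioo (0:ℝ) t, (t - s) ^ (-(1/2 : ℝ)) * s ^ (-β) * tamedLog s ^ (-a))
        ≤ C * (if β < 1 then t ^ (1/2 - β) * tamedLog t ^ (-a)
               else t ^ (-(1/2 : ℝ)) * tamedLog t ^ (1 - a)) := by
  obtain ⟨hβ0, hβ1, ha⟩ | ⟨rfl, ha⟩ := hcase
  · have : 0 < 1 - β := by linarith
    refine ⟨2 * (1 / (1 - β) + 1 / (1 - 1 / 2)), by positivity, fun t ht => ?_⟩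
    rw [if_pos hβ1, show (1 / 2 : ℝ) - β = 1 - 1 / 2 - β by ring]
    exact integral_sub_rpow_neg_mul_rpow_neg_tamedLog_le (by norm_num) (by norm_num) hβ0.le hβ1 ha
      ht.1
  · have : 0 < a - 1 := by linarith
    have := Real.log_pos one_lt_two
    refine ⟨2 * (1 / (a - 1) + 1 / (1 - 1 / 2) / Real.log 2), by positivity, fun t ht => ?_⟩
    rw [if_neg (lt_irrefl 1)]
    exact integral_sub_rpow_neg_mul_inv_tamedLog_le (by norm_num) (by norm_num) ha ht.1 ht.2
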